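/- Fix 0 < q < 1, n ∈ ℕ, a, b, c, d, t ∈ ℂ and θ ∈ ℝ, with |t| < 1, |tc| < 1, |td| < 1, and suppose (aq;q)_k ≠ 0, (tc;q)_k ≠ 0, (td;q)_k ≠ 0 for all 0 ≤ k ≤ n. Then the series ∑_{k=0}^{∞} (t^k/(q;q)_k)·p_n(q^k; a, b; q)·Q_k(cos θ; c, d | q) converges absolutely, and its sum equals ((tc;q)_∞ (td;q)_∞/((te^{iθ};q)_∞ (te^{−iθ};q)_∞)) · ∑_{k=0}^{n} ((q^{−n};q)_k (abq^{n+1};q)_k (te^{iθ};q)_k (te^{−iθ};q)_k)/((aq;q)_k (tc;q)_k (td;q)_k (q;q)_k) · q^k. -/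

import Mathlib

/-- Complex q-shifted factorial `(a;q)_k = ∏_{j=0}^{k-1} (1 - a q^j)`. -/
noncomputable def qPochC (q a : ℂ) (k : ℕ) : ℂ := ∏ j ∈ Finset.range k, (1 - a * q ^ j)

/-- Complex infinite q-shifted factorial `(a;q)_∞ = ∏_{j=0}^{∞} (1 - a q^j)`. -/
noncomputable def qPochInfC (q a : ℂ) : ℂ := ∏' j : ℕ, (1 - a * q ^ j)

/-- Little q-Jacobi polynomial
`p_n(x;a,b;q) = ∑_{k=0}^{n} ((q^{−n};q)_k (abq^{n+1};q)_k)/((aq;q)_k (q;q)_k) (qx)^k`. -/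
noncomputable def littleqJacobiC (q a b : ℂ) (n : ℕ) (x : ℂ) : ℂ :=
  ∑ k ∈ Finset.range (n + 1),
    qPochC q (q ^ (-(n : ℤ))) k * qPochC q (a * b * q ^ (n + 1)) k /
      (qPochC q (a * q) k * qPochC q q k) * (q * x) ^ k

/-- Al-Salam–Chihara polynomials, defined by `Q_0 = 1`, `Q_1 = 2x − (c+d)` and the
recurrence `2x Q_k = Q_{k+1} + (c+d)q^k Q_k + (1−q^k)(1−cdq^{k−1}) Q_{k−1}`. -/
noncomputable def alSalamChiharaC (q c d x : ℂ) : ℕ → ℂ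
  | 0 => 1
  | 1 => 2 * x - (c + d)
  | (k + 2) => (2 * x - (c + d) * q ^ (k + 1)) * alSalamChiharaC q c d x (k + 1)
      - (1 - q ^ (k + 1)) * (1 - c * d * q ^ k) * alSalamChiharaC q c d x k

/-!
Expanding `p_n(q^k; a, b; q)` turns the series into `∑_{j ≤ n} c_j q^j G(t q^j)`, where
`G(s) = ∑_k Q_k s^k / (q;q)_k`. As a power series, `G` turns the three-term recurrence of the
`Q_k` into `(1 - e s)(1 - e⁻¹ s) G(s) = (1 - c s)(1 - d s) G(q s)` with `e = e^{iθ}`, and this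
functional equation determines `G` from `G(0) = 1`. The product of the q-binomial series
`∑ (c e⁻¹;q)_k (e s)^k / (q;q)_k` and `∑ (d e;q)_k (e⁻¹ s)^k / (q;q)_k` satisfies it too, so
the q-binomial theorem gives `G(s) = (cs, ds;q)_∞ / (es, e⁻¹s;q)_∞`. Finally
`(x q^j;q)_∞ = (x;q)_∞ / (x;q)_j` produces the terms of the ₄φ₃ series.
-/

open Filter Topology Finset

section QPochhammer

variable {q : ℂ}

lemma qPochC_succ (q a : ℂ) (k : ℕ) : qPochC q a (k + 1) = qPochC q a k * (1 - a * q ^ k) :=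
  prod_range_succ _ _

lemma qPochC_self_succ (q : ℂ) (k : ℕ) :
    qPochC q q (k + 1) = qPochC q q k * (1 - q ^ (k + 1)) := by
  rw [qPochC_succ, pow_succ']

lemma qPochC_add (q a : ℂ) (m k : ℕ) :
    qPochC q a (m + k) = qPochC q a m * qPochC q (a * q ^ m) k := by
  simp only [qPochC, prod_range_add, pow_add, mul_assoc]

lemma summable_norm_mul_pow (hq : ‖q‖ < 1) (a : ℂ) : Summable fun j : ℕ ↦ ‖a * q ^ j‖ := by
  simpa [norm_mul, norm_pow] using
    (summable_geometric_of_lt_one (norm_nonneg _) hq).mul_left ‖a‖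

lemma norm_mul_pow_lt_one (hq : ‖q‖ < 1) {a : ℂ} (ha : ‖a‖ < 1) (j : ℕ) : ‖a * q ^ j‖ < 1 := by
  rw [norm_mul, norm_pow]
  exact mul_lt_one_of_nonneg_of_lt_one_left (norm_nonneg _) ha (pow_le_one₀ (norm_nonneg _) hq.le)

lemma one_sub_mul_pow_ne_zero (hq : ‖q‖ < 1) {a : ℂ} (ha : ‖a‖ < 1) (j : ℕ) :
    1 - a * q ^ j ≠ 0 := by
  refine sub_ne_zero.2 fun h ↦ ?_
  simpa [← h] using norm_mul_pow_lt_one hq ha j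

lemma pow_ne_one_of_norm_lt_one (hq : ‖q‖ < 1) {n : ℕ} (hn : n ≠ 0) : q ^ n ≠ 1 := by
  intro h
  have := congrArg norm h
  rw [norm_pow, norm_one] at this
  exact (pow_lt_one₀ (norm_nonneg q) hq hn).ne this

lemma one_sub_pow_ne_zero (hq : ‖q‖ < 1) {n : ℕ} (hn : n ≠ 0) : 1 - q ^ n ≠ 0 :=
  sub_ne_zero.2 (pow_ne_one_of_norm_lt_one hq hn).symm

lemma qPochC_ne_zero (hq : ‖q‖ < 1) {a : ℂ} (ha : ‖a‖ < 1) (k : ℕ) : qPochC q a k ≠ 0 :=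
  prod_ne_zero_iff.2 fun j _ ↦ one_sub_mul_pow_ne_zero hq ha j

lemma tendsto_qPochC (hq : ‖q‖ < 1) (a : ℂ) :
    Tendsto (qPochC q a) atTop (𝓝 (qPochInfC q a)) := by
  have : Multipliable fun j : ℕ ↦ 1 - a * q ^ j := by
    simpa [sub_eq_add_neg] using
      multipliable_one_add_of_summable (f := fun j : ℕ ↦ -(a * q ^ j))
        (by simpa using summable_norm_mul_pow hq a)
  exact this.hasProd.tendsto_prod_nat

lemma qPochInfC_ne_zero (hq : ‖q‖ < 1) {a : ℂ} (ha : ‖a‖ < 1) : qPochInfC q a ≠ 0 := by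
  simpa [qPochInfC, sub_eq_add_neg] using
    tprod_one_add_ne_zero_of_summable (f := fun j : ℕ ↦ -(a * q ^ j))
      (by simpa [← sub_eq_add_neg] using one_sub_mul_pow_ne_zero hq ha)
      (by simpa using summable_norm_mul_pow hq a)

lemma qPochInfC_eq_qPochC_mul (hq : ‖q‖ < 1) (a : ℂ) (m : ℕ) :
    qPochInfC q a = qPochC q a m * qPochInfC q (a * q ^ m) := by
  refine tendsto_nhds_unique ((tendsto_qPochC hq a).comp (tendsto_add_atTop_nat m)) ?_
  simpa [Function.comp_def, add_comm _ m, qPochC_add] using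
    (tendsto_qPochC hq (a * q ^ m)).const_mul (qPochC q a m)

lemma qPochInfC_mul_pow (hq : ‖q‖ < 1) {a : ℂ} {m : ℕ} (ha : qPochC q a m ≠ 0) :
    qPochInfC q (a * q ^ m) = qPochInfC q a / qPochC q a m := by
  rw [qPochInfC_eq_qPochC_mul hq a m, mul_div_cancel_left₀ _ ha]

end QPochhammer

section QBinomial

variable {q : ℂ}

noncomputable def qBinomialCoeff (q α : ℂ) (k : ℕ) : ℂ := qPochC q α k / qPochC q q k

noncomputable def qBinomialSeries (q α z : ℂ) : ℂ := ∑' k, qBinomialCoeff q α k * z ^ k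

lemma qBinomialCoeff_zero (q α : ℂ) : qBinomialCoeff q α 0 = 1 := by
  simp [qBinomialCoeff, qPochC]

lemma one_sub_pow_mul_qBinomialCoeff_succ (hq : ‖q‖ < 1) (α : ℂ) (k : ℕ) :
    (1 - q ^ (k + 1)) * qBinomialCoeff q α (k + 1)
      = (1 - α * q ^ k) * qBinomialCoeff q α k := by
  have := one_sub_pow_ne_zero hq k.succ_ne_zero
  rw [qBinomialCoeff, qBinomialCoeff, qPochC_succ, qPochC_self_succ]
  field_simp [qPochC_ne_zero hq hq k]

lemma exists_norm_qBinomialCoeff_le (hq : ‖q‖ < 1) (α : ℂ) :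
    ∃ C, ∀ k, ‖qBinomialCoeff q α k‖ ≤ C := by
  have := (tendsto_qPochC hq α).div (tendsto_qPochC hq q) (qPochInfC_ne_zero hq hq)
  obtain ⟨C, hC⟩ := isBounded_iff_forall_norm_le.1 (Metric.isBounded_range_of_tendsto _ this)
  exact ⟨C, fun k ↦ hC _ ⟨k, rfl⟩⟩

lemma summable_norm_qBinomialCoeff_mul_pow (hq : ‖q‖ < 1) (α : ℂ) {z : ℂ} (hz : ‖z‖ < 1) :
    Summable fun k ↦ ‖qBinomialCoeff q α k * z ^ k‖ := by
  obtain ⟨C, hC⟩ := exists_norm_qBinomialCoeff_le hq α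
  refine ((summable_geometric_of_lt_one (norm_nonneg z) hz).mul_left C).of_nonneg_of_le
    (fun _ ↦ norm_nonneg _) fun k ↦ ?_
  rw [norm_mul, norm_pow]
  gcongr
  exact hC k

lemma one_sub_mul_qBinomialSeries (hq : ‖q‖ < 1) (α : ℂ) {z : ℂ} (hz : ‖z‖ < 1) :
    (1 - z) * qBinomialSeries q α z = (1 - α * z) * qBinomialSeries q α (q * z) := by
  have hqz : ‖q * z‖ < 1 := by
    rw [norm_mul]; exact mul_lt_one_of_nonneg_of_lt_one_left (norm_nonneg _) hq hz.le
  have hf := (summable_norm_qBinomialCoeff_mul_pow hq α hz).of_norm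
  have hg := (summable_norm_qBinomialCoeff_mul_pow hq α hqz).of_norm
  have hdiff : qBinomialSeries q α z - qBinomialSeries q α (q * z)
      = ∑' k, (1 - q ^ k) * (qBinomialCoeff q α k * z ^ k) := by
    rw [qBinomialSeries, qBinomialSeries, ← hf.tsum_sub hg]
    congr 1 with k
    ring
  have hshift : ∑' k, (1 - q ^ k) * (qBinomialCoeff q α k * z ^ k)
      = z * qBinomialSeries q α z - α * z * qBinomialSeries q α (q * z) := by
    rw [qBinomialSeries, qBinomialSeries, ← tsum_mul_left, ← tsum_mul_left,
      ← (hf.mul_left z).tsum_sub (hg.mul_left (α * z)),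
      ((hf.sub hg).congr fun k ↦ by ring).tsum_eq_zero_add]
    simp only [pow_zero, sub_self, zero_mul, zero_add]
    congr 1 with k
    rw [← mul_assoc, one_sub_pow_mul_qBinomialCoeff_succ hq α k]
    ring
  linear_combination hdiff + hshift

lemma qBinomialSeries_mul_qPochC (hq : ‖q‖ < 1) (α : ℂ) {z : ℂ} (hz : ‖z‖ < 1) (N : ℕ) :
    qBinomialSeries q α z * qPochC q z N
      = qPochC q (α * z) N * qBinomialSeries q α (q ^ N * z) := by
  induction N with
  | zero => simp [qPochC]
  | succ N ih =>
    have := one_sub_mul_qBinomialSeries hq α (mul_comm z _ ▸ norm_mul_pow_lt_one hq hz N)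
    rw [qPochC_succ, qPochC_succ, ← mul_assoc, ih, pow_succ', mul_assoc q]
    linear_combination qPochC q (α * z) N * this

lemma tendsto_qBinomialSeries_pow_mul (hq : ‖q‖ < 1) (α : ℂ) {z : ℂ} (hz : ‖z‖ < 1) :
    Tendsto (fun N : ℕ ↦ qBinomialSeries q α (q ^ N * z)) atTop (𝓝 1) := by
  have hlim : ∀ k, Tendsto (fun N : ℕ ↦ qBinomialCoeff q α k * (q ^ N * z) ^ k) atTop
      (𝓝 (qBinomialCoeff q α k * (0 * z) ^ k)) := fun k ↦
    (((tendsto_pow_atTop_nhds_zero_of_norm_lt_one hq).mul_const z).pow k).const_mul _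
  have hsum : ∑' k, qBinomialCoeff q α k * (0 * z) ^ k = 1 := by
    rw [tsum_eq_single 0 fun k hk ↦ by simp [hk]]
    simp [qBinomialCoeff_zero]
  refine hsum ▸ tendsto_tsum_of_dominated_convergence
    (summable_norm_qBinomialCoeff_mul_pow hq α hz) hlim (.of_forall fun N k ↦ ?_)
  rw [norm_mul, norm_mul, norm_pow, norm_pow, norm_mul, norm_pow]
  gcongr
  exact mul_le_of_le_one_left (norm_nonneg _) (pow_le_one₀ (norm_nonneg _) hq.le)

theorem qBinomialSeries_mul_qPochInfC (hq : ‖q‖ < 1) (α : ℂ) {z : ℂ} (hz : ‖z‖ < 1) :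
    qBinomialSeries q α z * qPochInfC q z = qPochInfC q (α * z) := by
  refine tendsto_nhds_unique ((tendsto_qPochC hq z).const_mul _) ?_
  simpa [qBinomialSeries_mul_qPochC hq α hz] using
    (tendsto_qPochC hq (α * z)).mul (tendsto_qBinomialSeries_pow_mul hq α hz)

end QBinomial

namespace PowerSeries

variable {R : Type*} [CommRing R]

lemma coeff_mul_eq_constantCoeff_mul {n : ℕ} (F : R⟦X⟧) {W : R⟦X⟧}
    (hW : ∀ m < n, coeff m W = 0) : coeff n (F * W) = constantCoeff F * coeff n W := by
  rw [coeff_mul, sum_eq_single (0, n)]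
  · simp
  · rintro ⟨i, j⟩ hij hne
    rw [HasAntidiagonal.mem_antidiagonal] at hij
    rw [hW j (by grind), mul_zero]
  · simp

lemma coeff_zero_one_sub_C_mul_X_mul (a : R) (F : R⟦X⟧) :
    coeff 0 ((1 - C a * X) * F) = coeff 0 F := by
  simp [sub_mul, mul_assoc]

lemma coeff_succ_one_sub_C_mul_X_mul (a : R) (F : R⟦X⟧) (n : ℕ) :
    coeff (n + 1) ((1 - C a * X) * F) = coeff (n + 1) F - a * coeff n F := by
  simp only [sub_mul, one_mul, map_sub, mul_assoc, coeff_C_mul, coeff_succ_X_mul]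

lemma eq_zero_of_mul_eq_mul_rescale [IsDomain R] {A B W : R⟦X⟧} {q : R}
    (hq : ∀ n, n ≠ 0 → q ^ n ≠ 1) (hA : constantCoeff A = 1) (hB : constantCoeff B = 1)
    (hW : constantCoeff W = 0) (h : A * W = B * rescale q W) : W = 0 := by
  ext n
  induction n using Nat.strong_induction_on with
  | _ n ih =>
    rcases eq_or_ne n 0 with rfl | hn
    · simpa using hW
    have hcoeff := congrArg (coeff n) h
    rw [coeff_mul_eq_constantCoeff_mul A ih, coeff_mul_eq_constantCoeff_mul B
      (fun m hm ↦ by simp [coeff_rescale, ih m hm]), hA, hB, coeff_rescale] at hcoeff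
    have : (1 - q ^ n) * coeff n W = 0 := by linear_combination hcoeff
    simpa [sub_eq_zero, Ne.symm (hq n hn)] using this

end PowerSeries

open PowerSeries

section AlSalamChihara

variable {q : ℂ}

noncomputable def alSalamChiharaSeries (q c d x : ℂ) : ℂ⟦X⟧ :=
  PowerSeries.mk fun k ↦ alSalamChiharaC q c d x k / qPochC q q k

lemma alSalamChiharaC_div_qPochC_succ_succ (hq : ‖q‖ < 1) (c d x : ℂ) (n : ℕ) :
    (1 - q ^ (n + 2)) * (alSalamChiharaC q c d x (n + 2) / qPochC q q (n + 2))
      = (2 * x - (c + d) * q ^ (n + 1)) * (alSalamChiharaC q c d x (n + 1) / qPochC q q (n + 1))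
        - (1 - c * d * q ^ n) * (alSalamChiharaC q c d x n / qPochC q q n) := by
  have h1 := one_sub_pow_ne_zero hq (n + 1).succ_ne_zero
  have h2 := one_sub_pow_ne_zero hq n.succ_ne_zero
  rw [alSalamChiharaC, qPochC_self_succ, qPochC_self_succ]
  field_simp [qPochC_ne_zero hq hq n]

lemma one_sub_C_mul_X_mul_alSalamChiharaSeries (hq : ‖q‖ < 1) (c d : ℂ) {x e e' : ℂ}
    (he : e * e' = 1) (hx : e + e' = 2 * x) :
    (1 - C e * X) * ((1 - C e' * X) * alSalamChiharaSeries q c d x)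
      = (1 - C c * X) * ((1 - C d * X) * rescale q (alSalamChiharaSeries q c d x)) := by
  ext (_ | _ | n)
  · simp only [coeff_zero_one_sub_C_mul_X_mul, coeff_rescale, pow_zero, one_mul]
  · have := one_sub_pow_ne_zero hq one_ne_zero
    simp only [alSalamChiharaSeries, coeff_succ_one_sub_C_mul_X_mul,
      coeff_zero_one_sub_C_mul_X_mul, coeff_rescale, coeff_mk, alSalamChiharaC, qPochC_self_succ]
    simp only [qPochC, prod_range_zero, zero_add, pow_zero, pow_one, one_mul] at this ⊢
    field_simp
    linear_combination (q - 1) * hx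
  · simp only [alSalamChiharaSeries, coeff_succ_one_sub_C_mul_X_mul, coeff_rescale, coeff_mk]
    linear_combination alSalamChiharaC_div_qPochC_succ_succ hq c d x n
      - alSalamChiharaC q c d x (n + 1) / qPochC q q (n + 1) * hx
      + alSalamChiharaC q c d x n / qPochC q q n * he

lemma one_sub_C_mul_X_mul_rescale_mk_qBinomialCoeff (hq : ‖q‖ < 1) (α f : ℂ) :
    (1 - C f * X) * rescale f (PowerSeries.mk (qBinomialCoeff q α))
      = (1 - C (α * f) * X) * rescale q (rescale f (PowerSeries.mk (qBinomialCoeff q α))) := by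
  ext (_ | k)
  · simp only [coeff_zero_one_sub_C_mul_X_mul, coeff_rescale, pow_zero, one_mul]
  · simp only [coeff_succ_one_sub_C_mul_X_mul, coeff_rescale, coeff_mk]
    linear_combination f ^ (k + 1) * one_sub_pow_mul_qBinomialCoeff_succ hq α k

theorem alSalamChiharaSeries_eq_mul (hq : ‖q‖ < 1) (c d : ℂ) {x e e' : ℂ}
    (he : e * e' = 1) (hx : e + e' = 2 * x) :
    alSalamChiharaSeries q c d x
      = rescale e (PowerSeries.mk (qBinomialCoeff q (c * e')))
        * rescale e' (PowerSeries.mk (qBinomialCoeff q (d * e))) := by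
  set P := alSalamChiharaSeries q c d x
  set G₁ := rescale e (PowerSeries.mk (qBinomialCoeff q (c * e')))
  set G₂ := rescale e' (PowerSeries.mk (qBinomialCoeff q (d * e)))
  have h₁ : (1 - C e * X) * G₁ = (1 - C c * X) * rescale q G₁ := by
    rw [one_sub_C_mul_X_mul_rescale_mk_qBinomialCoeff hq,
      show c * e' * e = c by linear_combination c * he]
  have h₂ : (1 - C e' * X) * G₂ = (1 - C d * X) * rescale q G₂ := by
    rw [one_sub_C_mul_X_mul_rescale_mk_qBinomialCoeff hq,
      show d * e * e' = d by linear_combination d * he]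
  have hP : (1 - C e * X) * (1 - C e' * X) * P
      = (1 - C c * X) * (1 - C d * X) * rescale q P := by
    simpa only [mul_assoc] using one_sub_C_mul_X_mul_alSalamChiharaSeries hq c d he hx
  have hG : (1 - C e * X) * (1 - C e' * X) * (G₁ * G₂)
      = (1 - C c * X) * (1 - C d * X) * rescale q (G₁ * G₂) := by
    rw [map_mul]
    linear_combination (1 - C e' * X) * G₂ * h₁ + (1 - C c * X) * rescale q G₁ * h₂
  rw [← sub_eq_zero]
  refine eq_zero_of_mul_eq_mul_rescale (fun n hn ↦ pow_ne_one_of_norm_lt_one hq hn) ?_ ?_ ?_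
    (by rw [map_sub, mul_sub, mul_sub, hP, hG])
  · simp
  · simp
  · simp [P, G₁, G₂, alSalamChiharaSeries, rescale_mk, constantCoeff_mk, qBinomialCoeff_zero,
      alSalamChiharaC, qPochC]

lemma alSalamChiharaC_div_qPochC_mul_pow (hq : ‖q‖ < 1) (c d : ℂ) {x e e' : ℂ}
    (he : e * e' = 1) (hx : e + e' = 2 * x) (s : ℂ) (k : ℕ) :
    alSalamChiharaC q c d x k / qPochC q q k * s ^ k
      = ∑ i ∈ range (k + 1), qBinomialCoeff q (c * e') i * (s * e) ^ i
          * (qBinomialCoeff q (d * e) (k - i) * (s * e') ^ (k - i)) := by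
  have := congrArg (coeff k) (alSalamChiharaSeries_eq_mul hq c d he hx)
  rw [alSalamChiharaSeries, coeff_mk, coeff_mul, Nat.sum_antidiagonal_eq_sum_range_succ_mk] at this
  rw [this, sum_mul]
  refine sum_congr rfl fun i hi ↦ ?_
  rw [← pow_mul_pow_sub s (Nat.le_of_lt_succ (mem_range.1 hi))]
  simp only [coeff_rescale, coeff_mk, mul_pow]
  ring

theorem summable_norm_alSalamChiharaC_div_qPochC_mul_pow (hq : ‖q‖ < 1) (c d : ℂ)
    {x e e' s : ℂ}
    (he : e * e' = 1) (hx : e + e' = 2 * x) (hse : ‖s * e‖ < 1) (hse' : ‖s * e'‖ < 1) :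
    Summable fun k ↦ ‖alSalamChiharaC q c d x k / qPochC q q k * s ^ k‖ := by
  simpa only [alSalamChiharaC_div_qPochC_mul_pow hq c d he hx] using
    summable_norm_sum_mul_range_of_summable_norm
      (summable_norm_qBinomialCoeff_mul_pow hq (c * e') hse)
      (summable_norm_qBinomialCoeff_mul_pow hq (d * e) hse')

theorem tsum_alSalamChiharaC_div_qPochC_mul_pow (hq : ‖q‖ < 1) (c d : ℂ) {x e e' s : ℂ}
    (he : e * e' = 1) (hx : e + e' = 2 * x) (hse : ‖s * e‖ < 1) (hse' : ‖s * e'‖ < 1) :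
    ∑' k, alSalamChiharaC q c d x k / qPochC q q k * s ^ k
      = qPochInfC q (c * s) * qPochInfC q (d * s)
        / (qPochInfC q (s * e) * qPochInfC q (s * e')) := by
  have h₁ := qBinomialSeries_mul_qPochInfC hq (c * e') hse
  have h₂ := qBinomialSeries_mul_qPochInfC hq (d * e) hse'
  rw [show c * e' * (s * e) = c * s by linear_combination c * s * he] at h₁
  rw [show d * e * (s * e') = d * s by linear_combination d * s * he] at h₂
  simp_rw [alSalamChiharaC_div_qPochC_mul_pow hq c d he hx]
  rw [← tsum_mul_tsum_eq_tsum_sum_range_of_summable_norm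
      (summable_norm_qBinomialCoeff_mul_pow hq (c * e') hse)
      (summable_norm_qBinomialCoeff_mul_pow hq (d * e) hse'),
    eq_div_iff (mul_ne_zero (qPochInfC_ne_zero hq hse) (qPochInfC_ne_zero hq hse')), ← h₁, ← h₂,
    qBinomialSeries, qBinomialSeries]
  ring

end AlSalamChihara

lemma summable_norm_finsetSum {ι E : Type*} [SeminormedAddCommGroup E] (s : Finset ι)
    {f : ι → ℕ → E} (hf : ∀ j ∈ s, Summable fun k ↦ ‖f j k‖) :
    Summable fun k ↦ ‖∑ j ∈ s, f j k‖ :=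
  (summable_sum hf).of_nonneg_of_le (fun _ ↦ norm_nonneg _) fun _ ↦ norm_sum_le _ _

lemma div_qPochC_mul_littleqJacobiC_mul (q a b t y : ℂ) (n k : ℕ) :
    t ^ k / qPochC q q k * littleqJacobiC q a b n (q ^ k) * y
      = ∑ j ∈ range (n + 1), qPochC q (q ^ (-(n : ℤ))) j * qPochC q (a * b * q ^ (n + 1)) j
          / (qPochC q (a * q) j * qPochC q q j) * q ^ j
          * (y / qPochC q q k * (t * q ^ j) ^ k) := by
  rw [littleqJacobiC, mul_sum, sum_mul]
  refine sum_congr rfl fun j _ ↦ ?_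
  rw [mul_pow, mul_pow, ← pow_mul, ← pow_mul, mul_comm k j, pow_mul]
  ring

theorem stmt_10_general (q : ℝ) (hq : 0 < q) (hq1 : q < 1) (n : ℕ) (a b c d t : ℂ) (θ : ℝ)
    (ht : ‖t‖ < 1)
    (htc' : ∀ k ≤ n, qPochC (q : ℂ) (t * c) k ≠ 0)
    (htd' : ∀ k ≤ n, qPochC (q : ℂ) (t * d) k ≠ 0) :
    Summable (fun k : ℕ => ‖
      (t ^ k / qPochC (q : ℂ) (q : ℂ) k * littleqJacobiC (q : ℂ) a b n ((q : ℂ) ^ k)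
        * alSalamChiharaC (q : ℂ) c d ((Real.cos θ : ℝ) : ℂ) k)‖) ∧
    (∑' k : ℕ, t ^ k / qPochC (q : ℂ) (q : ℂ) k * littleqJacobiC (q : ℂ) a b n ((q : ℂ) ^ k)
        * alSalamChiharaC (q : ℂ) c d ((Real.cos θ : ℝ) : ℂ) k)
      = qPochInfC (q : ℂ) (t * c) * qPochInfC (q : ℂ) (t * d)
          / (qPochInfC (q : ℂ) (t * Complex.exp ((θ : ℂ) * Complex.I))
              * qPochInfC (q : ℂ) (t * Complex.exp (-(θ : ℂ) * Complex.I)))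
        * ∑ k ∈ Finset.range (n + 1),
            qPochC (q : ℂ) ((q : ℂ) ^ (-(n : ℤ))) k
              * qPochC (q : ℂ) (a * b * (q : ℂ) ^ (n + 1)) k
              * qPochC (q : ℂ) (t * Complex.exp ((θ : ℂ) * Complex.I)) k
              * qPochC (q : ℂ) (t * Complex.exp (-(θ : ℂ) * Complex.I)) k
              / (qPochC (q : ℂ) (a * (q : ℂ)) k * qPochC (q : ℂ) (t * c) k
                  * qPochC (q : ℂ) (t * d) k * qPochC (q : ℂ) (q : ℂ) k)
              * (q : ℂ) ^ k := by
  have hq' : ‖(q : ℂ)‖ < 1 := by rwa [Complex.norm_real, Real.norm_of_nonneg hq.le]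
  set e := Complex.exp ((θ : ℂ) * Complex.I)
  set e' := Complex.exp (-(θ : ℂ) * Complex.I)
  have he : e * e' = 1 := by
    rw [← Complex.exp_add, ← add_mul, add_neg_cancel, zero_mul, Complex.exp_zero]
  have hx : e + e' = 2 * ((Real.cos θ : ℝ) : ℂ) := by
    simp only [e, e', Complex.ofReal_cos, Complex.cos, neg_mul]; ring
  have hte : ‖t * e‖ < 1 := by simpa [e, Complex.norm_exp] using ht
  have hte' : ‖t * e'‖ < 1 := by simpa [e', Complex.norm_exp] using ht
  have hs : ∀ {f : ℂ}, ‖t * f‖ < 1 → ∀ j : ℕ, ‖t * (q : ℂ) ^ j * f‖ < 1 := fun {f} hf j ↦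
    mul_right_comm t _ f ▸ norm_mul_pow_lt_one hq' hf j
  simp_rw [div_qPochC_mul_littleqJacobiC_mul]
  refine ⟨summable_norm_finsetSum _ fun j _ ↦ ?_, ?_⟩
  · exact ((summable_norm_alSalamChiharaC_div_qPochC_mul_pow hq' c d he hx
      (hs hte j) (hs hte' j)).mul_left _).congr fun k ↦ (norm_mul _ _).symm
  rw [Summable.tsum_finsetSum fun j _ ↦ ((summable_norm_alSalamChiharaC_div_qPochC_mul_pow hq' c
    d he hx (hs hte j) (hs hte' j)).of_norm.mul_left _), mul_sum]
  refine sum_congr rfl fun j hj ↦ ?_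
  have hjn := Nat.le_of_lt_succ (mem_range.1 hj)
  rw [tsum_mul_left, tsum_alSalamChiharaC_div_qPochC_mul_pow hq' c d he hx (hs hte j) (hs hte' j),
    show c * (t * q ^ j) = t * c * q ^ j by ring, show d * (t * q ^ j) = t * d * q ^ j by ring,
    mul_right_comm t _ e, mul_right_comm t _ e',
    qPochInfC_mul_pow hq' (htc' j hjn), qPochInfC_mul_pow hq' (htd' j hjn),
    qPochInfC_mul_pow hq' (qPochC_ne_zero hq' hte j),
    qPochInfC_mul_pow hq' (qPochC_ne_zero hq' hte' j)]
  simp only [div_eq_mul_inv, mul_inv, inv_inv]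
  ring

/-- The generating-function identity: `∑_{k=0}^{∞} (t^k/(q;q)_k) p_n(q^k;a,b;q)
Q_k(cos θ;c,d|q)` converges absolutely and equals the terminating ₄φ₃ series times
`(tc;q)_∞ (td;q)_∞ / ((te^{iθ};q)_∞ (te^{−iθ};q)_∞)`. -/
theorem stmt_10 (q : ℝ) (hq : 0 < q) (hq1 : q < 1) (n : ℕ) (a b c d t : ℂ) (θ : ℝ)
    (ht : ‖t‖ < 1) (htc : ‖t * c‖ < 1)
    (htd : ‖t * d‖ < 1)
    (haq : ∀ k ≤ n, qPochC (q : ℂ) (a * (q : ℂ)) k ≠ 0)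
    (htc' : ∀ k ≤ n, qPochC (q : ℂ) (t * c) k ≠ 0)
    (htd' : ∀ k ≤ n, qPochC (q : ℂ) (t * d) k ≠ 0) :
    Summable (fun k : ℕ => ‖
      (t ^ k / qPochC (q : ℂ) (q : ℂ) k * littleqJacobiC (q : ℂ) a b n ((q : ℂ) ^ k)
        * alSalamChiharaC (q : ℂ) c d ((Real.cos θ : ℝ) : ℂ) k)‖) ∧
    (∑' k : ℕ, t ^ k / qPochC (q : ℂ) (q : ℂ) k * littleqJacobiC (q : ℂ) a b n ((q : ℂ) ^ k)
        * alSalamChiharaC (q : ℂ) c d ((Real.cos θ : ℝ) : ℂ) k)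
      = qPochInfC (q : ℂ) (t * c) * qPochInfC (q : ℂ) (t * d)
          / (qPochInfC (q : ℂ) (t * Complex.exp ((θ : ℂ) * Complex.I))
              * qPochInfC (q : ℂ) (t * Complex.exp (-(θ : ℂ) * Complex.I)))
        * ∑ k ∈ Finset.range (n + 1),
            qPochC (q : ℂ) ((q : ℂ) ^ (-(n : ℤ))) k
              * qPochC (q : ℂ) (a * b * (q : ℂ) ^ (n + 1)) k
              * qPochC (q : ℂ) (t * Complex.exp ((θ : ℂ) * Complex.I)) k
              * qPochC (q : ℂ) (t * Complex.exp (-(θ : ℂ) * Complex.I)) k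
              / (qPochC (q : ℂ) (a * (q : ℂ)) k * qPochC (q : ℂ) (t * c) k
                  * qPochC (q : ℂ) (t * d) k * qPochC (q : ℂ) (q : ℂ) k)
              * (q : ℂ) ^ k :=
  stmt_10_general q hq hq1 n a b c d t θ ht htc' htd'
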